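/- arXiv:1407.0749 — 2 statements merged into one kernel-verified Lean document; each statement's English description precedes it below -/
import Mathlib

section
/- For a real matrix A with singular value decomposition A = U S Vᵀ (S diagonal with nonnegative entries), the matrix B = U S' Vᵀ, where S'ᵢᵢ = min(Sᵢᵢ, c), minimizes the Frobenius norm ‖A − B‖_F over all matrices B with spectral norm ‖B‖₂ ≤ c. -/
/-!
Conjugating by the orthogonal factors `U` and `V` preserves both the spectral and the Frobenius
norm, so everything reduces to the diagonal matrix `S`. The thresholded diagonal matrix has
spectral norm at most `c`, because its Gram matrix is diagonal with entries at most `c²`. Every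
entry of a matrix of spectral norm at most `c` is at most `c`, and for such an entry `t` one has
`(s - min s c)² ≤ (s - t)²`; summing these entrywise inequalities compares the Frobenius
distances.
-/

open Matrix

noncomputable def frobNorm {m n : ℕ} (A : Matrix (Fin m) (Fin n) ℝ) : ℝ :=
  Real.sqrt (∑ i, ∑ j, A i j ^ 2)

noncomputable def specNorm {m n : ℕ} (A : Matrix (Fin m) (Fin n) ℝ) : ℝ :=
  ‖LinearMap.toContinuousLinearMap (Matrix.toEuclideanLin A)‖

open scoped Matrix.Norms.L2Operator

namespace Matrix

section L2OpNorm

variable {𝕜 m n : Type*} [RCLike 𝕜] [Fintype m] [Fintype n]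

lemma norm_apply_le_l2_opNorm [DecidableEq n] (X : Matrix m n 𝕜) (i : m) (j : n) :
    ‖X i j‖ ≤ ‖X‖ := by
  set e : EuclideanSpace 𝕜 n := PiLp.single 2 j 1
  calc ‖X i j‖ = ‖(EuclideanSpace.equiv m 𝕜).symm (X *ᵥ e) i‖ := by
        simp [e, PiLp.ofLp_single, mulVec_single]
    _ ≤ ‖(EuclideanSpace.equiv m 𝕜).symm (X *ᵥ e)‖ := PiLp.norm_apply_le _ i
    _ ≤ ‖X‖ * ‖e‖ := l2_opNorm_mulVec X e
    _ = ‖X‖ := by simp [e, PiLp.norm_single]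

variable [DecidableEq m] [DecidableEq n]

lemma l2_opNorm_le_one_of_mem_unitaryGroup {U : Matrix n n 𝕜} (hU : U ∈ unitaryGroup n 𝕜) :
    ‖U‖ ≤ 1 := by
  have h_one : ‖(1 : Matrix n n 𝕜)‖ ≤ 1 := by
    rw [cstar_norm_def, map_one]
    exact ContinuousLinearMap.norm_id_le
  have h_sq : ‖U‖ * ‖U‖ ≤ 1 * 1 := by
    rw [← l2_opNorm_conjTranspose_mul_self, ← star_eq_conjTranspose,
      (mem_unitaryGroup_iff' (A := U)).1 hU, one_mul]
    exact h_one
  exact (mul_self_le_mul_self_iff (norm_nonneg _) zero_le_one).2 h_sq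

lemma l2_opNorm_mul_mul_conjTranspose_le {U : Matrix m m 𝕜} {V : Matrix n n 𝕜}
    (hU : U ∈ unitaryGroup m 𝕜) (hV : V ∈ unitaryGroup n 𝕜) (X : Matrix m n 𝕜) :
    ‖U * X * Vᴴ‖ ≤ ‖X‖ := by
  have hVH : Vᴴ ∈ unitaryGroup n 𝕜 := Unitary.star_mem hV
  calc ‖U * X * Vᴴ‖ ≤ ‖U‖ * ‖X‖ * ‖Vᴴ‖ :=
        (l2_opNorm_mul _ _).trans (by gcongr; exact l2_opNorm_mul _ _)
    _ ≤ 1 * ‖X‖ * 1 := by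
        gcongr
        · exact l2_opNorm_le_one_of_mem_unitaryGroup hU
        · exact l2_opNorm_le_one_of_mem_unitaryGroup hVH
    _ = ‖X‖ := by ring

lemma l2_opNorm_mul_mul_conjTranspose {U : Matrix m m 𝕜} {V : Matrix n n 𝕜}
    (hU : U ∈ unitaryGroup m 𝕜) (hV : V ∈ unitaryGroup n 𝕜) (X : Matrix m n 𝕜) :
    ‖U * X * Vᴴ‖ = ‖X‖ := by
  refine le_antisymm (l2_opNorm_mul_mul_conjTranspose_le hU hV X) ?_
  have hX : X = Uᴴ * (U * X * Vᴴ) * Vᴴᴴ := by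
    rw [conjTranspose_conjTranspose, ← star_eq_conjTranspose, ← star_eq_conjTranspose]
    simp only [← Matrix.mul_assoc, (mem_unitaryGroup_iff' (A := U)).1 hU, Matrix.one_mul]
    rw [Matrix.mul_assoc, (mem_unitaryGroup_iff' (A := V)).1 hV, Matrix.mul_one]
  calc ‖X‖ = ‖Uᴴ * (U * X * Vᴴ) * Vᴴᴴ‖ := by rw [← hX]
    _ ≤ ‖U * X * Vᴴ‖ :=
        l2_opNorm_mul_mul_conjTranspose_le (Unitary.star_mem hU) (Unitary.star_mem hV) _

end L2OpNorm

lemma l2_opNorm_le_of_val_ne_eq_zero {m n : ℕ} {X : Matrix (Fin m) (Fin n) ℝ} {c : ℝ}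
    (hc : 0 ≤ c) (hdiag : ∀ (i : Fin m) (j : Fin n), (i : ℕ) ≠ j → X i j = 0)
    (hle : ∀ i j, |X i j| ≤ c) :
    ‖X‖ ≤ c := by
  have hgram : Xᵀ * X = diagonal fun j => ∑ i, X i j ^ 2 := by
    ext j j'
    rw [mul_apply, diagonal_apply]
    split_ifs with hjj'
    · simp [hjj', sq]
    · refine Finset.sum_eq_zero fun i _ => ?_
      by_cases hij : (i : ℕ) = j
      · rw [transpose_apply, hdiag i j' fun hij' => hjj' (Fin.ext (hij.symm.trans hij')), mul_zero]
      · rw [transpose_apply, hdiag i j hij, zero_mul]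
  have hcol : ∀ j, ∑ i, X i j ^ 2 ≤ c ^ 2 := by
    intro j
    by_cases hj : (j : ℕ) < m
    · rw [Fintype.sum_eq_single ⟨j, hj⟩ fun i hi => by
        rw [hdiag i j fun h => hi (Fin.ext h), sq, zero_mul]]
      exact sq_le_sq.2 ((hle _ _).trans (le_abs_self c))
    · rw [Finset.sum_eq_zero fun i _ => by rw [hdiag i j fun h => hj (h ▸ i.isLt), sq, zero_mul]]
      positivity
  have h_sq : ‖X‖ * ‖X‖ ≤ c * c := by
    rw [← l2_opNorm_conjTranspose_mul_self, conjTranspose_eq_transpose_of_trivial, hgram,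
      l2_opNorm_diagonal, pi_norm_le_iff_of_nonneg (mul_nonneg hc hc)]
    intro j
    rw [Real.norm_of_nonneg (Finset.sum_nonneg fun i _ => sq_nonneg _), ← sq]
    exact hcol j
  exact (mul_self_le_mul_self_iff (norm_nonneg _) hc).2 h_sq

end Matrix

section Frobenius

variable {m n : ℕ}

lemma frobNorm_eq_sqrt_trace (X : Matrix (Fin m) (Fin n) ℝ) :
    frobNorm X = √(trace (Xᵀ * X)) := by
  rw [frobNorm, Finset.sum_comm]
  simp only [trace, diag, mul_apply, transpose_apply, sq]

lemma frobNorm_mul_mul_transpose {U : Matrix (Fin m) (Fin m) ℝ} {V : Matrix (Fin n) (Fin n) ℝ}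
    (hU : U ∈ orthogonalGroup (Fin m) ℝ) (hV : V ∈ orthogonalGroup (Fin n) ℝ)
    (X : Matrix (Fin m) (Fin n) ℝ) :
    frobNorm (U * X * Vᵀ) = frobNorm X := by
  have hgram : (U * X * Vᵀ)ᵀ * (U * X * Vᵀ) = V * (Xᵀ * ((Uᵀ * U) * (X * Vᵀ))) := by
    simp only [transpose_mul, transpose_transpose, Matrix.mul_assoc]
  rw [frobNorm_eq_sqrt_trace, frobNorm_eq_sqrt_trace, hgram, (mem_orthogonalGroup_iff' _ _).1 hU,
    Matrix.one_mul, trace_mul_comm, Matrix.mul_assoc, Matrix.mul_assoc,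
    (mem_orthogonalGroup_iff' _ _).1 hV, Matrix.mul_one]

lemma frobNorm_le_frobNorm_of_sq_le {X Y : Matrix (Fin m) (Fin n) ℝ}
    (h : ∀ i j, X i j ^ 2 ≤ Y i j ^ 2) : frobNorm X ≤ frobNorm Y :=
  Real.sqrt_le_sqrt (Finset.sum_le_sum fun i _ => Finset.sum_le_sum fun j _ => h i j)

end Frobenius

lemma sq_sub_min_le_sq_sub {s t c : ℝ} (ht : t ≤ c) : (s - min s c) ^ 2 ≤ (s - t) ^ 2 := by
  rcases le_total s c with hsc | hcs
  · simp [min_eq_left hsc, sq_nonneg]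
  · rw [min_eq_right hcs]
    exact pow_le_pow_left₀ (sub_nonneg.2 hcs) (by linarith) 2

theorem stmt0_general {m n : ℕ} (A S : Matrix (Fin m) (Fin n) ℝ) (c : ℝ) (hc : 0 ≤ c)
    (U : Matrix (Fin m) (Fin m) ℝ) (V : Matrix (Fin n) (Fin n) ℝ)
    (hU : Uᵀ * U = 1)
    (hV : Vᵀ * V = 1)
    (hSdiag : ∀ (i : Fin m) (j : Fin n), (i : ℕ) ≠ (j : ℕ) → S i j = 0)
    (hSpos : ∀ i j, 0 ≤ S i j)
    (hA : A = U * S * Vᵀ)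
    (B : Matrix (Fin m) (Fin n) ℝ)
    (hB : B = U * (Matrix.of fun i j => min (S i j) c) * Vᵀ) :
    specNorm B ≤ c ∧
      ∀ B' : Matrix (Fin m) (Fin n) ℝ, specNorm B' ≤ c →
        frobNorm (A - B) ≤ frobNorm (A - B') := by
  have hUo : U ∈ orthogonalGroup (Fin m) ℝ := (mem_orthogonalGroup_iff' _ _).2 hU
  have hVo : V ∈ orthogonalGroup (Fin n) ℝ := (mem_orthogonalGroup_iff' _ _).2 hV
  -- `specNorm` unfolds to Mathlib's L2 operator norm.
  have hspec (X : Matrix (Fin m) (Fin n) ℝ) : specNorm (U * X * Vᵀ) = ‖X‖ := by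
    rw [← conjTranspose_eq_transpose_of_trivial]
    exact l2_opNorm_mul_mul_conjTranspose hUo hVo X
  refine ⟨?_, fun B' hB' => ?_⟩
  · rw [hB, hspec]
    refine l2_opNorm_le_of_val_ne_eq_zero hc (fun i j hij => ?_) fun i j => ?_
    · simp [hSdiag i j hij, hc]
    · rw [of_apply, abs_of_nonneg (le_min (hSpos i j) hc)]
      exact min_le_right _ _
  · set M := Uᵀ * B' * V
    have hB'M : B' = U * M * Vᵀ := by
      rw [show U * M * Vᵀ = (U * Uᵀ) * B' * (V * Vᵀ) by simp only [M, Matrix.mul_assoc],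
        (mem_orthogonalGroup_iff _ _).1 hUo, (mem_orthogonalGroup_iff _ _).1 hVo,
        Matrix.one_mul, Matrix.mul_one]
    have hM (i j) : M i j ≤ c :=
      calc M i j ≤ ‖M i j‖ := le_abs_self _
        _ ≤ ‖M‖ := norm_apply_le_l2_opNorm M i j
        _ ≤ c := by rwa [← hspec, ← hB'M]
    rw [hA, hB, hB'M, ← Matrix.sub_mul, ← Matrix.mul_sub, ← Matrix.sub_mul, ← Matrix.mul_sub,
      frobNorm_mul_mul_transpose hUo hVo, frobNorm_mul_mul_transpose hUo hVo]
    exact frobNorm_le_frobNorm_of_sq_le fun i j => sq_sub_min_le_sq_sub (hM i j)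

/-- Thresholding the singular values at `c` gives the Frobenius projection onto the
spectral-norm ball of radius `c`. -/
theorem stmt0 {m n : ℕ} (A S : Matrix (Fin m) (Fin n) ℝ) (c : ℝ) (hc : 0 ≤ c)
    (U : Matrix (Fin m) (Fin m) ℝ) (V : Matrix (Fin n) (Fin n) ℝ)
    (hU : Uᵀ * U = 1) (hU' : U * Uᵀ = 1)
    (hV : Vᵀ * V = 1) (hV' : V * Vᵀ = 1)
    (hSdiag : ∀ (i : Fin m) (j : Fin n), (i : ℕ) ≠ (j : ℕ) → S i j = 0)
    (hSpos : ∀ i j, 0 ≤ S i j)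
    (hA : A = U * S * Vᵀ)
    (B : Matrix (Fin m) (Fin n) ℝ)
    (hB : B = U * (Matrix.of fun i j => min (S i j) c) * Vᵀ) :
    specNorm B ≤ c ∧
      ∀ B' : Matrix (Fin m) (Fin n) ℝ, specNorm B' ≤ c →
        frobNorm (A - B) ≤ frobNorm (A - B') :=
  stmt0_general A S c hc U V hU hV hSdiag hSpos hA B hB
end

section
/- For an Ising model p(x) ∝ exp(∑_{i,j} β_{ij} x_i x_j + ∑_i α_i x_i) on x ∈ {−1,+1}^n, the dependency matrix entry R_{ij} = max_{x,x': x_{−j}=x'_{−j}} ‖p(X_i|x_{−i}) − p(X_i|x'_{−i})‖_TV satisfies R_{ij} ≤ tanh|β_{ij}| ≤ |β_{ij}| for i ≠ j. -/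
/-!
The conditional law of `x_i` is `P(x_i = 1) = σ(2 h) = (1 + tanh h) / 2`, where `h` is the local
field at `i`, so its total variation distance to the law under `x'` is `|tanh h - tanh h'| / 2`.
Flipping `x_j` changes the field by at most `2 |β_ij|`, and
`tanh a - tanh b = sinh (a - b) / (cosh a cosh b)` with `cosh a cosh b ≥ cosh² ((a - b) / 2)`
gives `|tanh a - tanh b| ≤ 2 tanh (|a - b| / 2)`.
-/

open Matrix
/-- The logistic sigmoid. -/
noncomputable def sigm (t : ℝ) : ℝ := 1 / (1 + Real.exp (-t))

/-- Conditional distribution of `x_i ∈ {-1,+1}` (encoded by `Bool`) in an Ising model,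
given the rest of a configuration `x`: the local field is `∑_{k ≠ i} β_{ik} x_k + α_i`. -/
noncomputable def isingCond {n : ℕ} (β : Matrix (Fin n) (Fin n) ℝ) (α : Fin n → ℝ)
    (i : Fin n) (x : Fin n → ℝ) : Bool → ℝ :=
  fun b =>
    if b then sigm (2 * ((∑ k ∈ Finset.univ.erase i, β i k * x k) + α i))
    else 1 - sigm (2 * ((∑ k ∈ Finset.univ.erase i, β i k * x k) + α i))

namespace Real

lemma sigmoid_two_mul (t : ℝ) : sigmoid (2 * t) = (1 + tanh t) / 2 := by
  have := exp_pos t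
  have := exp_pos (-t)
  rw [sigmoid_def, tanh_eq, show -(2 * t) = -t + -t by ring, exp_add, exp_neg]
  field_simp
  ring

lemma tanh_strictMono : StrictMono tanh := by
  intro a b hab
  have := sigmoid_lt (by linarith : 2 * a < 2 * b)
  rw [sigmoid_two_mul, sigmoid_two_mul] at this
  linarith

lemma sinh_le_mul_cosh {y : ℝ} (hy : 0 ≤ y) : sinh y ≤ y * cosh y := by
  have hderiv : ∀ t ∈ Set.Icc 0 y, HasDerivWithinAt sinh (cosh t) (Set.Icc 0 y) t :=
    fun t _ => (hasDerivAt_sinh t).hasDerivWithinAt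
  have hbound : ∀ t ∈ Set.Ico 0 y, ‖cosh t‖ ≤ cosh y := fun t ht => by
    rw [norm_of_nonneg (cosh_pos t).le, cosh_le_cosh, abs_of_nonneg ht.1, abs_of_nonneg hy]
    exact ht.2.le
  have := norm_image_sub_le_of_norm_deriv_le_segment' hderiv hbound y ⟨hy, le_rfl⟩
  rw [sinh_zero, sub_zero, sub_zero, norm_of_nonneg (sinh_nonneg_iff.mpr hy)] at this
  linarith

lemma tanh_le_self {y : ℝ} (hy : 0 ≤ y) : tanh y ≤ y := by
  rw [tanh_eq_sinh_div_cosh, div_le_iff₀ (cosh_pos y)]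
  exact sinh_le_mul_cosh hy

lemma tanh_sub_tanh (a b : ℝ) : tanh a - tanh b = sinh (a - b) / (cosh a * cosh b) := by
  have := cosh_pos a
  have := cosh_pos b
  rw [tanh_eq_sinh_div_cosh, tanh_eq_sinh_div_cosh, sinh_sub]
  field_simp

lemma cosh_add_mul_cosh_sub (u v : ℝ) :
    cosh (u + v) * cosh (u - v) = cosh u ^ 2 + sinh v ^ 2 := by
  rw [cosh_add, cosh_sub]
  linear_combination (sinh v ^ 2) * cosh_sq u + (cosh u ^ 2) * cosh_sq v

lemma abs_tanh (x : ℝ) : |tanh x| = tanh |x| := by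
  rw [tanh_eq_sinh_div_cosh, tanh_eq_sinh_div_cosh, abs_div, abs_sinh, cosh_abs,
    abs_of_pos (cosh_pos x)]

lemma abs_tanh_sub_tanh_le (a b : ℝ) : |tanh a - tanh b| ≤ 2 * tanh (|a - b| / 2) := by
  set u := (a + b) / 2
  set v := (a - b) / 2
  have hcv : 0 < cosh v := cosh_pos v
  have hprod : cosh a * cosh b = cosh u ^ 2 + sinh v ^ 2 := by
    rw [← cosh_add_mul_cosh_sub, show u + v = a by ring, show u - v = b by ring]
  have hprod_ge : cosh v ^ 2 ≤ cosh a * cosh b := by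
    rw [hprod, cosh_sq']
    linarith [one_le_pow₀ (n := 2) (one_le_cosh u)]
  have hsinh : |sinh (a - b)| = 2 * |tanh v| * cosh v ^ 2 := by
    rw [show a - b = 2 * v by ring, sinh_two_mul, tanh_eq_sinh_div_cosh, abs_mul, abs_mul,
      abs_div, abs_of_pos hcv, abs_two]
    field_simp
  rw [tanh_sub_tanh, abs_div, abs_of_pos (mul_pos (cosh_pos a) (cosh_pos b)),
    div_le_iff₀ (mul_pos (cosh_pos a) (cosh_pos b)), hsinh,
    show |a - b| / 2 = |v| by rw [abs_div, abs_two], ← abs_tanh]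
  linarith [mul_le_mul_of_nonneg_left hprod_ge (abs_nonneg (tanh v))]

end Real

open Real

lemma sigm_eq_sigmoid : sigm = sigmoid := by
  ext t
  rw [sigm, sigmoid_def, one_div]

section IsingModel

variable {n : ℕ} (β : Matrix (Fin n) (Fin n) ℝ) (α : Fin n → ℝ) (i : Fin n)

noncomputable def localField (x : Fin n → ℝ) : ℝ :=
  (∑ k ∈ Finset.univ.erase i, β i k * x k) + α i

lemma half_sum_abs_isingCond_sub (x x' : Fin n → ℝ) :
    (1 / 2) * ∑ b : Bool, |isingCond β α i x b - isingCond β α i x' b|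
      = |tanh (localField β α i x) - tanh (localField β α i x')| / 2 := by
  have hcond : ∀ y b, isingCond β α i y b = if b then sigmoid (2 * localField β α i y)
      else 1 - sigmoid (2 * localField β α i y) := fun y b => by
    rw [← sigm_eq_sigmoid]; rfl
  set a := localField β α i x
  set a' := localField β α i x'
  have hsub : (1 + tanh a) / 2 - (1 + tanh a') / 2 = (tanh a - tanh a') / 2 := by ring
  simp only [Fintype.sum_bool, hcond, if_true, Bool.false_eq_true, if_false, sigmoid_two_mul]
  rw [sub_sub_sub_cancel_left, abs_sub_comm ((1 + tanh a') / 2), hsub, abs_div, abs_two]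
  ring

lemma localField_sub_of_eq_off {j : Fin n} (hij : i ≠ j) {x x' : Fin n → ℝ}
    (hagree : ∀ k, k ≠ j → x k = x' k) :
    localField β α i x - localField β α i x' = β i j * (x j - x' j) := by
  have hj : j ∈ Finset.univ.erase i := Finset.mem_erase.mpr ⟨hij.symm, Finset.mem_univ j⟩
  rw [localField, localField, add_sub_add_right_eq_sub, ← Finset.sum_sub_distrib,
    Finset.sum_eq_single_of_mem j hj fun k _ hk => by rw [hagree k hk, sub_self], mul_sub]

end IsingModel

theorem stmt4_general {n : ℕ} (β : Matrix (Fin n) (Fin n) ℝ) (α : Fin n → ℝ)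
    (i j : Fin n) (hij : i ≠ j)
    (x x' : Fin n → ℝ)
    (hx : ∀ k, x k = 1 ∨ x k = -1) (hx' : ∀ k, x' k = 1 ∨ x' k = -1)
    (hagree : ∀ k, k ≠ j → x k = x' k) :
    (1 / 2) * ∑ b : Bool, |isingCond β α i x b - isingCond β α i x' b|
      ≤ Real.tanh |β i j| ∧ Real.tanh |β i j| ≤ |β i j| := by
  refine ⟨?_, tanh_le_self (abs_nonneg _)⟩
  have hflip : |x j - x' j| ≤ 2 := by
    rcases hx j with h | h <;> rcases hx' j with h' | h' <;> norm_num [h, h']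
  have hfield : |localField β α i x - localField β α i x'| / 2 ≤ |β i j| := by
    rw [localField_sub_of_eq_off β α i hij hagree, abs_mul]
    linarith [mul_le_mul_of_nonneg_left hflip (abs_nonneg (β i j))]
  rw [half_sum_abs_isingCond_sub]
  calc |tanh (localField β α i x) - tanh (localField β α i x')| / 2
      ≤ tanh (|localField β α i x - localField β α i x'| / 2) := by
        linarith [abs_tanh_sub_tanh_le (localField β α i x) (localField β α i x')]
    _ ≤ tanh |β i j| := tanh_strictMono.monotone hfield

/-- Every entry of the Ising dependency matrix satisfies
`R_{ij} ≤ tanh |β_{ij}| ≤ |β_{ij}|`: for any two ±1 configurations differing only at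
coordinate `j ≠ i`, the TV distance between the conditionals of `x_i` is at most
`tanh |β_{ij}|`. -/
theorem stmt4 {n : ℕ} (β : Matrix (Fin n) (Fin n) ℝ) (α : Fin n → ℝ)
    (hβsym : βᵀ = β) (hβdiag : ∀ i, β i i = 0)
    (i j : Fin n) (hij : i ≠ j)
    (x x' : Fin n → ℝ)
    (hx : ∀ k, x k = 1 ∨ x k = -1) (hx' : ∀ k, x' k = 1 ∨ x' k = -1)
    (hagree : ∀ k, k ≠ j → x k = x' k) :
    (1 / 2) * ∑ b : Bool, |isingCond β α i x b - isingCond β α i x' b|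
      ≤ Real.tanh |β i j| ∧ Real.tanh |β i j| ≤ |β i j| :=
  stmt4_general β α i j hij x x' hx hx' hagree
end
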